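/- Let k ≥ 2 and let G be a red-blue edge-colored graph that contains a blue path on k vertices with end vertices x and y, a vertex-disjoint path v₁v₂v₃v₄ whose edge v₁v₂ is blue and whose edges v₂v₃ and v₃v₄ are red, a further vertex v₅ distinct from all of these, and three further colored edges yv₄, v₂v₅, and v₄v₅ (each colored red or blue). Then G contains either a red path on 4 vertices or a blue path on k+4 vertices. -/

import Mathlib

/-! If one of the extra edges `yv₄`, `v₂v₅`, `v₄v₅` is red, it extends the red path `v₂v₃v₄`
to a red `P₄` (`yv₄v₃v₂`, `v₅v₂v₃v₄` or `v₂v₃v₄v₅`). Otherwise all three are blue and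
`w₁ … w_k v₄ v₅ v₂ v₁` is a blue path on `k + 4` vertices. -/

open SimpleGraph

/-- `H` is contained as a (not necessarily induced) subgraph of `G`,
i.e. `G` contains a copy of `H`. -/
def ContainsCopy {α V : Type*} (H : SimpleGraph α) (G : SimpleGraph V) : Prop :=
  ∃ f : α → V, Function.Injective f ∧ ∀ ⦃a b⦄, H.Adj a b → G.Adj (f a) (f b)

theorem containsCopy_pathGraph_of_isChain {V : Type*} {G : SimpleGraph V} {l : List V}
    (hl : l.Nodup) (hc : l.IsChain G.Adj) : ContainsCopy (pathGraph l.length) G := by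
  refine ⟨l.get, List.nodup_iff_injective_get.mp hl, fun a b hab => ?_⟩
  rcases pathGraph_adj.mp hab with h | h
  · simpa [← h] using hc.getElem a (h ▸ b.isLt)
  · simpa [← h] using (hc.getElem b (h ▸ a.isLt)).symm

theorem containsCopy_pathGraph_four {V : Type*} {G : SimpleGraph V} {a b c d : V}
    (hl : [a, b, c, d].Nodup) (hab : G.Adj a b) (hbc : G.Adj b c) (hcd : G.Adj c d) :
    ContainsCopy (pathGraph 4) G :=
  containsCopy_pathGraph_of_isChain hl (by simp [hab, hbc, hcd])

theorem containsCopy_pathGraph_add_of_append {V : Type*} {G : SimpleGraph V} {k : ℕ}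
    (hk : 0 < k) {w : Fin k → V} {l : List V} (hw : Function.Injective w)
    (hwpath : ∀ i j : Fin k, (j : ℕ) = (i : ℕ) + 1 → G.Adj (w i) (w j))
    (hl : l.Nodup) (hc : l.IsChain G.Adj) (hwl : ∀ i, w i ∉ l)
    (hjoin : ∀ v ∈ l.head?, G.Adj (w ⟨k - 1, by omega⟩) v) :
    ContainsCopy (pathGraph (k + l.length)) G := by
  have hnodup : (List.ofFn w ++ l).Nodup := by
    refine List.nodup_append.mpr ⟨List.nodup_ofFn.mpr hw, hl, ?_⟩
    rintro _ hi v hv rfl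
    obtain ⟨i, rfl⟩ := List.mem_ofFn.mp hi
    exact hwl i hv
  have hchain : (List.ofFn w ++ l).IsChain G.Adj := by
    refine List.isChain_append.mpr
      ⟨List.isChain_ofFn.mpr fun i hi => hwpath _ _ rfl, hc, ?_⟩
    rw [List.getLast?_eq_some_getLast (by simpa using hk.ne'), List.getLast_ofFn]
    simpa using hjoin
  have hcopy := containsCopy_pathGraph_of_isChain hnodup hchain
  rwa [List.length_append, List.length_ofFn] at hcopy

/-- Pattern `brr` of Lemma 4: let `k ≥ 2` and let `G` be a red-blue edge-colored graph
(red edges `R`, blue edges `B`) containing a blue path `w₁…w_k` with ends `x = w₁` and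
`y = w_k`, a vertex-disjoint path `v₁v₂v₃v₄` with `v₁v₂` blue and `v₂v₃`, `v₃v₄` red,
a further vertex `v₅` distinct from all of these, and further colored edges `yv₄`, `v₂v₅`,
`v₄v₅` (each red or blue). Then `G` contains a red `P₄` or a blue `P_{k+4}`. -/
theorem lemma_pattern_brr (V : Type*) (R B : SimpleGraph V)
    (k : ℕ) (hk : 2 ≤ k) (w : Fin k → V) (v₁ v₂ v₃ v₄ v₅ : V)
    (hw : Function.Injective w)
    (hvnodup : ([v₁, v₂, v₃, v₄, v₅] : List V).Nodup)
    (hwv : ∀ i, w i ∉ ({v₁, v₂, v₃, v₄, v₅} : Set V))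
    (hwpath : ∀ i j : Fin k, (j : ℕ) = (i : ℕ) + 1 → B.Adj (w i) (w j))
    (hb₁ : B.Adj v₁ v₂) (hr₁ : R.Adj v₂ v₃) (hr₂ : R.Adj v₃ v₄)
    (e₁ : R.Adj (w ⟨k - 1, by omega⟩) v₄ ∨ B.Adj (w ⟨k - 1, by omega⟩) v₄)
    (e₂ : R.Adj v₂ v₅ ∨ B.Adj v₂ v₅)
    (e₃ : R.Adj v₄ v₅ ∨ B.Adj v₄ v₅) :
    ContainsCopy (SimpleGraph.pathGraph 4) R ∨ ContainsCopy (SimpleGraph.pathGraph (k + 4)) B := by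
  have hy := hwv ⟨k - 1, by omega⟩
  rcases e₁ with e₁ | e₁
  · exact .inl (containsCopy_pathGraph_four (by simp_all [eq_comm]) hr₁ hr₂ e₁.symm)
  rcases e₂ with e₂ | e₂
  · exact .inl (containsCopy_pathGraph_four (by simp_all [eq_comm]) e₂.symm hr₁ hr₂)
  rcases e₃ with e₃ | e₃
  · exact .inl (containsCopy_pathGraph_four (by simp_all [eq_comm]) hr₁ hr₂ e₃)
  exact .inr (containsCopy_pathGraph_add_of_append (l := [v₄, v₅, v₂, v₁]) (by omega) hw
    hwpath (by simp_all [eq_comm]) (by simp [e₃, e₂.symm, hb₁.symm])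
    (fun i hi => hwv i (by simp_all [eq_comm])) (by simpa using e₁))
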